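/- arXiv:1306.5911 — 3 statements merged into one kernel-verified Lean document; each statement's English description precedes it below -/
import Mathlib

section
/- The integral of sin²(x)/x² from 0 to infinity equals π/2. -/
/-!
Since `∫₀^∞ t e^{-xt} dt = 1/x²`, the integral is the double integral of `t e^{-xt} sin² x` over
the positive quadrant. By Tonelli we may integrate in `x` first: writing
`sin² x = (1 - cos 2x)/2` and using `∫₀^∞ e^{-tx} cos(bx) dx = t/(t² + b²)` (the real part of a
complex exponential integral), the inner integral is `2/(t² + 4)`, whose integral is `π/2`.
-/

open Real MeasureTheory Set

lemma lintegral_ofReal_eq_ofReal_of_integral_eq {α : Type*} [MeasurableSpace α] {μ : Measure α}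
    {f : α → ℝ} {c : ℝ} (hf : 0 ≤ᵐ[μ] f) (h : ∫ a, f a ∂μ = c) (hc : c ≠ 0) :
    ∫⁻ a, ENNReal.ofReal (f a) ∂μ = ENNReal.ofReal c := by
  rw [← ofReal_integral_eq_lintegral_ofReal (.of_integral_ne_zero (h ▸ hc)) hf, h]

lemma integral_mul_exp_neg_mul_Ioi {r : ℝ} (hr : 0 < r) :
    ∫ t in Ioi (0 : ℝ), t * exp (-(r * t)) = 1 / r ^ 2 := by
  simpa [Real.Gamma_two, show (2 : ℝ) - 1 = 1 by norm_num] using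
    integral_rpow_mul_exp_neg_mul_Ioi two_pos hr

lemma integral_inv_sq_add_sq_Ioi {a : ℝ} (ha : 0 < a) :
    ∫ t in Ioi (0 : ℝ), (t ^ 2 + a ^ 2)⁻¹ = π / (2 * a) := by
  have h := integral_comp_mul_left_Ioi (fun t => (1 + t ^ 2)⁻¹) 0 (inv_pos.mpr ha)
  simp only [mul_zero, integral_Ioi_inv_one_add_sq, arctan_zero, sub_zero, smul_eq_mul,
    inv_inv] at h
  calc ∫ t in Ioi (0 : ℝ), (t ^ 2 + a ^ 2)⁻¹
      = ∫ t in Ioi (0 : ℝ), (a ^ 2)⁻¹ * (1 + (a⁻¹ * t) ^ 2)⁻¹ := by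
        refine integral_congr_ae (ae_of_all _ fun t => ?_)
        field_simp
        ring
    _ = π / (2 * a) := by
        rw [integral_const_mul, h]
        field_simp

lemma integral_exp_neg_mul_mul_cos_Ioi {t : ℝ} (ht : 0 < t) (b : ℝ) :
    ∫ x in Ioi (0 : ℝ), exp (-(t * x)) * cos (b * x) = t / (t ^ 2 + b ^ 2) := by
  set a : ℂ := -t + b * Complex.I
  have ha : a.re < 0 := by simpa [a] using ht
  have hre (x : ℝ) : exp (-(t * x)) * cos (b * x) = RCLike.re (Complex.exp (a * x)) := by
    simp [a, Complex.exp_re]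
  simp_rw [hre]
  rw [integral_re (integrableOn_exp_mul_complex_Ioi ha 0), integral_exp_mul_complex_Ioi ha 0]
  simp [a, Complex.div_re, Complex.normSq_apply]
  field_simp

lemma integrableOn_exp_neg_mul_mul_cos_Ioi {t : ℝ} (ht : 0 < t) (b : ℝ) :
    IntegrableOn (fun x => exp (-(t * x)) * cos (b * x)) (Ioi 0) :=
  .of_integral_ne_zero <| by rw [integral_exp_neg_mul_mul_cos_Ioi ht]; positivity

lemma integral_exp_neg_mul_mul_sin_sq_Ioi {t : ℝ} (ht : 0 < t) :
    ∫ x in Ioi (0 : ℝ), exp (-(t * x)) * sin x ^ 2 = 2 / (t * (t ^ 2 + 2 ^ 2)) := by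
  have hsin (x : ℝ) : exp (-(t * x)) * sin x ^ 2
      = (exp (-(t * x)) * cos (0 * x) - exp (-(t * x)) * cos (2 * x)) / 2 := by
    rw [zero_mul, cos_zero, cos_two_mul, cos_sq']
    ring
  simp_rw [hsin]
  rw [integral_div, integral_sub (integrableOn_exp_neg_mul_mul_cos_Ioi ht 0)
    (integrableOn_exp_neg_mul_mul_cos_Ioi ht 2), integral_exp_neg_mul_mul_cos_Ioi ht,
    integral_exp_neg_mul_mul_cos_Ioi ht]
  field_simp
  ring

lemma ofReal_sin_sq_div_sq_eq_lintegral {x : ℝ} (hx : 0 < x) :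
    ENNReal.ofReal (sin x ^ 2 / x ^ 2)
      = ∫⁻ t in Ioi (0 : ℝ), ENNReal.ofReal (t * exp (-(x * t)) * sin x ^ 2) := by
  have hnonneg : 0 ≤ᵐ[volume.restrict (Ioi 0)] fun t => t * exp (-(x * t)) :=
    (ae_restrict_iff' measurableSet_Ioi).mpr (ae_of_all _ fun t (ht : 0 < t) => by positivity)
  simp_rw [ENNReal.ofReal_mul' (sq_nonneg (sin x))]
  rw [lintegral_mul_const' _ _ ENNReal.ofReal_ne_top,
    lintegral_ofReal_eq_ofReal_of_integral_eq hnonneg (integral_mul_exp_neg_mul_Ioi hx)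
      (by positivity), ← ENNReal.ofReal_mul (by positivity), one_div_mul_eq_div]

lemma lintegral_mul_exp_neg_mul_mul_sin_sq_Ioi {t : ℝ} (ht : 0 < t) :
    ∫⁻ x in Ioi (0 : ℝ), ENNReal.ofReal (t * exp (-(x * t)) * sin x ^ 2)
      = ENNReal.ofReal (2 / (t ^ 2 + 2 ^ 2)) := by
  refine lintegral_ofReal_eq_ofReal_of_integral_eq (ae_of_all _ fun x => by positivity) ?_
    (by positivity)
  simp_rw [mul_assoc, mul_comm _ t]
  rw [integral_const_mul, integral_exp_neg_mul_mul_sin_sq_Ioi ht]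
  field_simp

lemma lintegral_sin_sq_div_sq_Ioi :
    ∫⁻ x in Ioi (0 : ℝ), ENNReal.ofReal (sin x ^ 2 / x ^ 2) = ENNReal.ofReal (π / 2) :=
  calc ∫⁻ x in Ioi (0 : ℝ), ENNReal.ofReal (sin x ^ 2 / x ^ 2)
      = ∫⁻ x in Ioi (0 : ℝ), ∫⁻ t in Ioi (0 : ℝ),
          ENNReal.ofReal (t * exp (-(x * t)) * sin x ^ 2) :=
        setLIntegral_congr_fun measurableSet_Ioi fun _ hx => ofReal_sin_sq_div_sq_eq_lintegral hx
    _ = ∫⁻ t in Ioi (0 : ℝ), ∫⁻ x in Ioi (0 : ℝ),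
          ENNReal.ofReal (t * exp (-(x * t)) * sin x ^ 2) :=
        lintegral_lintegral_swap (by fun_prop)
    _ = ∫⁻ t in Ioi (0 : ℝ), ENNReal.ofReal (2 / (t ^ 2 + 2 ^ 2)) :=
        setLIntegral_congr_fun measurableSet_Ioi fun _ ht =>
          lintegral_mul_exp_neg_mul_mul_sin_sq_Ioi ht
    _ = ENNReal.ofReal (π / 2) := by
        refine lintegral_ofReal_eq_ofReal_of_integral_eq (ae_of_all _ fun t => by positivity) ?_
          (by positivity)
        simp_rw [div_eq_mul_inv (2 : ℝ)]
        rw [integral_const_mul, integral_inv_sq_add_sq_Ioi two_pos]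
        ring

/-- ∫₀^∞ sin²x/x² dx = π/2. -/
theorem sin_sq_div_sq_integral :
    ∫ x in Set.Ioi (0:ℝ), Real.sin x ^ 2 / x ^ 2 = π / 2 := by
  rw [integral_eq_lintegral_of_nonneg_ae (ae_of_all _ fun x => by positivity)
    (by fun_prop : Measurable _).aestronglyMeasurable, lintegral_sin_sq_div_sq_Ioi,
    ENNReal.toReal_ofReal (by positivity)]
end

section
/- The integral of sin³(x)/x³ from 0 to infinity equals 3π/8. -/
/-!
Write `1 / x ^ 3 = (1 / 2) ∫₀^∞ t² e^{-xt} dt` and swap the two integrals; this is legitimate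
because the absolute integrand integrates to a multiple of `|sin x| ^ 3 / x ^ 3`, which is
integrable. The inner integral is then the Laplace transform of
`sin x ^ 3 = (3 sin x - sin 3x) / 4`, namely `(3 / 4) (1 / (t² + 1) - 1 / (t² + 9))`, and the
integral becomes `(3 / 8) ∫₀^∞ (9 / (t² + 9) - 1 / (t² + 1)) dt = (3 / 8) (3π / 2 - π / 2)`.
-/

open Real MeasureTheory Set
open scoped Nat

lemma integral_pow_mul_exp_neg_mul_Ioi (n : ℕ) {r : ℝ} (hr : 0 < r) :
    ∫ t in Ioi 0, t ^ n * exp (-(r * t)) = n ! / r ^ (n + 1) := by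
  have h := integral_rpow_mul_exp_neg_mul_Ioi (a := n + 1) (by positivity) hr
  rw [add_sub_cancel_right, Gamma_nat_eq_factorial, ← Nat.cast_succ, rpow_natCast,
    div_pow, one_pow, one_div_mul_eq_div] at h
  rw [← h]
  refine setIntegral_congr_fun measurableSet_Ioi fun t _ ↦ ?_
  simp

lemma integral_Ioi_inv_sq_add_sq {a : ℝ} (ha : 0 < a) :
    ∫ t in Ioi 0, (t ^ 2 + a ^ 2)⁻¹ = π / (2 * a) := by
  have h := integral_comp_mul_left_Ioi (fun u : ℝ ↦ (1 + u ^ 2)⁻¹) 0 (inv_pos.2 ha)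
  simp only [mul_zero, integral_Ioi_inv_one_add_sq, arctan_zero, sub_zero, smul_eq_mul,
    inv_inv] at h
  calc ∫ t in Ioi 0, (t ^ 2 + a ^ 2)⁻¹ = ∫ t in Ioi 0, (a ^ 2)⁻¹ * (1 + (a⁻¹ * t) ^ 2)⁻¹ := by
        refine setIntegral_congr_fun measurableSet_Ioi fun t _ ↦ ?_
        field_simp
        ring
    _ = π / (2 * a) := by
        rw [integral_const_mul, h]
        field_simp

lemma integrableOn_Ioi_inv_sq_add_sq {a : ℝ} (ha : 0 < a) :
    IntegrableOn (fun t : ℝ ↦ (t ^ 2 + a ^ 2)⁻¹) (Ioi 0) :=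
  Integrable.of_integral_ne_zero (by rw [integral_Ioi_inv_sq_add_sq ha]; positivity)

lemma sinc_sq_le_two_mul_inv_one_add_sq (x : ℝ) : sinc x ^ 2 ≤ 2 * (1 + x ^ 2)⁻¹ := by
  rcases eq_or_ne x 0 with rfl | hx
  · norm_num
  rw [sinc_of_ne_zero hx, div_pow, div_le_iff₀ (by positivity), ← div_eq_mul_inv,
    div_mul_eq_mul_div, le_div_iff₀ (by positivity)]
  nlinarith [sin_sq_le_one x, sin_sq_le_sq (x := x), sq_nonneg x, sq_nonneg (sin x)]

lemma integrable_sinc_pow {n : ℕ} (hn : 2 ≤ n) : Integrable (fun x ↦ sinc x ^ n) := by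
  refine (integrable_inv_one_add_sq.const_mul 2).mono' (by fun_prop) (ae_of_all _ fun x ↦ ?_)
  calc ‖sinc x ^ n‖ = |sinc x| ^ n := by rw [norm_pow, Real.norm_eq_abs]
    _ ≤ |sinc x| ^ 2 := pow_le_pow_of_le_one (abs_nonneg _) (abs_sinc_le_one x) hn
    _ ≤ 2 * (1 + x ^ 2)⁻¹ := by rw [sq_abs]; exact sinc_sq_le_two_mul_inv_one_add_sq x

noncomputable def laplaceTransform (g : ℝ → ℝ) (t : ℝ) : ℝ :=
  ∫ x in Ioi 0, exp (-(t * x)) * g x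

lemma exp_neg_mul_mul_sin_eq_im (t b x : ℝ) :
    exp (-(t * x)) * sin (b * x) = (Complex.exp ((-t + b * Complex.I) * x)).im := by
  rw [Complex.exp_im]
  simp [add_mul, mul_right_comm _ Complex.I]

lemma integrableOn_exp_neg_mul_mul_sin {t : ℝ} (ht : 0 < t) (b : ℝ) :
    IntegrableOn (fun x ↦ exp (-(t * x)) * sin (b * x)) (Ioi 0) := by
  simp only [exp_neg_mul_mul_sin_eq_im]
  exact (integrableOn_exp_mul_complex_Ioi (a := -t + b * Complex.I) (by simpa) 0).im

lemma laplaceTransform_sin_mul {t : ℝ} (ht : 0 < t) (b : ℝ) :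
    laplaceTransform (fun x ↦ sin (b * x)) t = b / (t ^ 2 + b ^ 2) := by
  have hint := integrableOn_exp_mul_complex_Ioi (a := -t + b * Complex.I) (by simpa) 0
  simp only [laplaceTransform, exp_neg_mul_mul_sin_eq_im]
  have him := integral_im hint
  simp only [RCLike.im_to_complex] at him
  rw [him, integral_exp_mul_complex_Ioi (by simpa) 0]
  simp [Complex.div_im, Complex.normSq_apply]
  ring

lemma laplaceTransform_sin_pow_three {t : ℝ} (ht : 0 < t) :
    laplaceTransform (fun x ↦ sin x ^ 3) t = 3 / 4 * (1 / (t ^ 2 + 1) - 1 / (t ^ 2 + 9)) := by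
  have h : ∀ x, exp (-(t * x)) * sin x ^ 3 =
      3 / 4 * (exp (-(t * x)) * sin (1 * x)) - 1 / 4 * (exp (-(t * x)) * sin (3 * x)) := by
    intro x
    rw [sin_three_mul, one_mul]
    ring
  have h1 := laplaceTransform_sin_mul ht 1
  have h3 := laplaceTransform_sin_mul ht 3
  simp only [laplaceTransform] at h1 h3 ⊢
  simp only [h]
  rw [integral_sub ((integrableOn_exp_neg_mul_mul_sin ht 1).const_mul _)
    ((integrableOn_exp_neg_mul_mul_sin ht 3).const_mul _), integral_const_mul, integral_const_mul,
    h1, h3]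
  ring

theorem integral_div_pow_succ_eq_integral_laplaceTransform {g : ℝ → ℝ} (n : ℕ)
    (hint : IntegrableOn (fun x ↦ g x / x ^ (n + 1)) (Ioi 0)) :
    ∫ x in Ioi 0, g x / x ^ (n + 1) =
      (n ! : ℝ)⁻¹ * ∫ t in Ioi 0, t ^ n * laplaceTransform g t := by
  set μ := volume.restrict (Ioi (0 : ℝ))
  set F : ℝ → ℝ → ℝ := fun x t ↦ t ^ n * exp (-(x * t)) * g x
  have hkernel : ∀ x ∈ Ioi (0 : ℝ), ∀ c : ℝ,
      ∫ t, t ^ n * exp (-(x * t)) * c ∂μ = n ! * (c / x ^ (n + 1)) := by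
    intro x hx c
    rw [integral_mul_const, integral_pow_mul_exp_neg_mul_Ioi n hx]
    ring
  have hF_norm : ∀ x ∈ Ioi (0 : ℝ), ∫ t, ‖F x t‖ ∂μ = n ! * ‖g x / x ^ (n + 1)‖ := by
    intro x hx
    have habs : ∀ t ∈ Ioi (0 : ℝ), ‖F x t‖ = t ^ n * exp (-(x * t)) * ‖g x‖ := fun t ht ↦ by
      simp [F, abs_of_pos (mem_Ioi.1 ht)]
    rw [setIntegral_congr_fun measurableSet_Ioi habs, hkernel x hx, norm_div, norm_pow,
      Real.norm_of_nonneg (le_of_lt hx)]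
  have hg : AEStronglyMeasurable g μ := by
    refine (hint.aestronglyMeasurable.mul (continuous_pow (n + 1)).aestronglyMeasurable).congr ?_
    filter_upwards [self_mem_ae_restrict measurableSet_Ioi] with x hx
    simp only [Pi.mul_apply]
    field_simp [(mem_Ioi.1 hx).ne']
  have hF_int : Integrable (Function.uncurry F) (μ.prod μ) := by
    have hkernel_cont : Continuous fun p : ℝ × ℝ ↦ p.2 ^ n * exp (-(p.1 * p.2)) := by fun_prop
    have hmeas : AEStronglyMeasurable (Function.uncurry F) (μ.prod μ) :=
      hkernel_cont.aestronglyMeasurable.mul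
        (hg.comp_quasiMeasurePreserving Measure.quasiMeasurePreserving_fst)
    refine (integrable_prod_iff hmeas).2 ⟨?_, ?_⟩
    · filter_upwards [self_mem_ae_restrict measurableSet_Ioi] with x hx
      refine (Integrable.of_integral_ne_zero ?_).mul_const (g x)
      rw [integral_pow_mul_exp_neg_mul_Ioi n hx]
      exact div_ne_zero (by positivity) (pow_ne_zero _ hx.ne')
    · refine (hint.norm.const_mul (n ! : ℝ)).congr ?_
      filter_upwards [self_mem_ae_restrict measurableSet_Ioi] with x hx
      exact (hF_norm x hx).symm
  calc ∫ x in Ioi 0, g x / x ^ (n + 1) = (n ! : ℝ)⁻¹ * ∫ x, ∫ t, F x t ∂μ ∂μ := by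
        rw [← integral_const_mul]
        refine setIntegral_congr_fun measurableSet_Ioi fun x hx ↦ ?_
        rw [hkernel x hx]
        field_simp
    _ = (n ! : ℝ)⁻¹ * ∫ t in Ioi 0, t ^ n * laplaceTransform g t := by
        rw [integral_integral_swap hF_int]
        simp only [laplaceTransform, F, ← integral_const_mul]
        congr 2 with t
        congr 1 with x
        ring_nf

/-- ∫₀^∞ sin³x/x³ dx = 3π/8. -/
theorem sin_cube_div_cube_integral :
    ∫ x in Set.Ioi (0:ℝ), Real.sin x ^ 3 / x ^ 3 = 3 * π / 8 := by
  have hint : IntegrableOn (fun x ↦ sin x ^ 3 / x ^ (2 + 1)) (Ioi 0) :=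
    (integrable_sinc_pow (by norm_num : 2 ≤ 3)).integrableOn.congr_fun
      (fun x hx ↦ by dsimp only; rw [sinc_of_ne_zero (ne_of_gt hx), div_pow]) measurableSet_Ioi
  have hrat : ∀ t ∈ Ioi (0 : ℝ), t ^ 2 * laplaceTransform (fun x ↦ sin x ^ 3) t =
      3 / 4 * (9 * (t ^ 2 + 3 ^ 2)⁻¹ - (t ^ 2 + 1 ^ 2)⁻¹) := fun t ht ↦ by
    rw [laplaceTransform_sin_pow_three ht]
    field_simp
    ring
  calc ∫ x in Ioi 0, sin x ^ 3 / x ^ 3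
      = (2 ! : ℝ)⁻¹ * ∫ t in Ioi 0, t ^ 2 * laplaceTransform (fun x ↦ sin x ^ 3) t :=
        integral_div_pow_succ_eq_integral_laplaceTransform 2 hint
    _ = (2 ! : ℝ)⁻¹ * ∫ t in Ioi 0, 3 / 4 * (9 * (t ^ 2 + 3 ^ 2)⁻¹ - (t ^ 2 + 1 ^ 2)⁻¹) := by
        rw [setIntegral_congr_fun measurableSet_Ioi hrat]
    _ = 3 * π / 8 := by
        rw [integral_const_mul,
          integral_sub ((integrableOn_Ioi_inv_sq_add_sq three_pos).const_mul 9)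
            (integrableOn_Ioi_inv_sq_add_sq one_pos), integral_const_mul,
          integral_Ioi_inv_sq_add_sq three_pos, integral_Ioi_inv_sq_add_sq one_pos]
        norm_num [Nat.factorial]
        ring
end

section
/- The integral ∫₀^∞ sin³(x)/x² dx equals (3/4)·ln 3. -/
/-!
Since `sin³ x = (3 sin x - sin 3x) / 4`, the integrand is `(3/4) · (sinc x - sinc 3x) / x`,
and Frullani's integral, with `sinc 0 = 1` and `sinc x → 0` at infinity, evaluates the latter
to `log 3`.
-/

open Real MeasureTheory Set Filter Topology

namespace Real

lemma tendsto_sinc_atTop : Tendsto sinc atTop (𝓝 0) := by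
  have hsin : IsBoundedUnder (· ≤ ·) atTop fun x ↦ ‖sin x‖ :=
    isBoundedUnder_of ⟨1, fun x ↦ by simpa using abs_sin_le_one x⟩
  refine (tendsto_inv_atTop_zero.zero_mul_isBoundedUnder_le hsin).congr' ?_
  filter_upwards [eventually_gt_atTop 0] with x hx
  rw [sinc_of_ne_zero hx.ne', div_eq_inv_mul]

lemma integral_inv_mul_sinc_sub_sinc {a b : ℝ} (ha : 0 < a) (hb : 0 < b)
    (hint : IntegrableOn (fun x ↦ x⁻¹ * (sinc (a * x) - sinc (b * x))) (Ioi 0)) :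
    ∫ x in Ioi 0, x⁻¹ * (sinc (a * x) - sinc (b * x)) = log (b / a) := by
  have hzero : Tendsto sinc (𝓝[>] 0) (𝓝 1) :=
    sinc_zero ▸ continuous_sinc.continuousAt.tendsto.mono_left nhdsWithin_le_nhds
  simpa using Frullani.integral_Ioi_eq (continuous_sinc.locallyIntegrable.locallyIntegrableOn _)
    ha hb hzero tendsto_sinc_atTop hint

lemma integrableOn_sin_pow_div_sq {n : ℕ} (hn : 2 ≤ n) :
    IntegrableOn (fun x ↦ sin x ^ n / x ^ 2) (Ioi 0) := by
  have hmeas : AEStronglyMeasurable (fun x ↦ sin x ^ n / x ^ 2) :=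
    (by fun_prop : Measurable fun x ↦ sin x ^ n / x ^ 2).aestronglyMeasurable
  have hsin_pow (x : ℝ) : |sin x| ^ n ≤ sin x ^ 2 := by
    rw [← sq_abs]
    exact pow_le_pow_of_le_one (abs_nonneg _) (abs_sin_le_one x) hn
  rw [← Ioc_union_Ioi_eq_Ioi zero_le_one]
  refine IntegrableOn.union ?_ ?_
  · refine (integrableOn_const measure_Ioc_lt_top.ne (C := (1 : ℝ))).mono' hmeas.restrict ?_
    filter_upwards [ae_restrict_mem measurableSet_Ioc] with x hx
    rw [norm_div, norm_pow, norm_pow, Real.norm_eq_abs, Real.norm_eq_abs,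
      div_le_one (pow_pos (abs_pos.2 hx.1.ne') 2)]
    calc |sin x| ^ n ≤ sin x ^ 2 := hsin_pow x
      _ = |sin x| ^ 2 := (sq_abs _).symm
      _ ≤ |x| ^ 2 := pow_le_pow_left₀ (abs_nonneg _) abs_sin_le_abs 2
  · refine (integrableOn_Ioi_rpow_of_lt (by norm_num : (-2 : ℝ) < -1) one_pos).mono'
      hmeas.restrict ?_
    filter_upwards [ae_restrict_mem measurableSet_Ioi] with x (hx : 1 < x)
    have hx0 : 0 < x := one_pos.trans hx
    rw [norm_div, norm_pow, norm_pow, Real.norm_eq_abs, Real.norm_eq_abs, abs_of_pos hx0,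
      rpow_neg hx0.le, rpow_two, ← one_div]
    gcongr
    exact (hsin_pow x).trans (sin_sq_le_one x)

lemma sin_pow_three_div_sq_eq_sinc (x : ℝ) :
    sin x ^ 3 / x ^ 2 = 3 / 4 * (x⁻¹ * (sinc (1 * x) - sinc (3 * x))) := by
  rcases eq_or_ne x 0 with rfl | hx
  · simp
  rw [one_mul, sinc_of_ne_zero hx, sinc_of_ne_zero (mul_ne_zero three_ne_zero hx), sin_three_mul]
  field_simp
  ring

end Real

/-- ∫₀^∞ sin³x/x² dx = (3/4)·ln 3. -/
theorem sin_cube_div_sq_integral :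
    ∫ x in Set.Ioi (0:ℝ), Real.sin x ^ 3 / x ^ 2 = 3 / 4 * Real.log 3 := by
  have hint : IntegrableOn (fun x ↦ x⁻¹ * (sinc (1 * x) - sinc (3 * x))) (Ioi 0) := by
    refine IntegrableOn.congr_fun
      ((integrableOn_sin_pow_div_sq (n := 3) (by norm_num)).const_mul (4 / 3)) (fun x _ ↦ ?_)
      measurableSet_Ioi
    rw [sin_pow_three_div_sq_eq_sinc]
    ring
  simp_rw [sin_pow_three_div_sq_eq_sinc]
  rw [integral_const_mul, integral_inv_mul_sinc_sub_sinc one_pos three_pos hint, div_one]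
end
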